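/- Let λ be a nonzero real number and m a positive integer. For every n ≥ 0, the identity φ_{n,λ/m}(x/m) = m^{−n} Σ_{k=0}^{n} C(n,k) (−1)_{n−k,λ} d_{m,λ}(k,x) holds as polynomials in x, where C(n,k) is the binomial coefficient and (−1)_{j,λ} denotes the λ-falling factorial evaluated at −1. -/

import Mathlib

open Nat PowerSeries Finset

noncomputable section

/-- λ-falling factorial (x)_{n,λ} = x(x−λ)···(x−(n−1)λ). -/
def dfall (l x : ℝ) (n : ℕ) : ℝ := ∏ i ∈ range n, (x - i * l)

/-- degenerate exponential e_λ^x(t) = Σ (x)_{n,λ} t^n/n! as a formal power series. -/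
def degExp (l x : ℝ) : PowerSeries ℝ := PowerSeries.mk fun n => dfall l x n / n !

/-- degenerate logarithm log_λ(1+t) = Σ_{n≥1} (∏_{j=1}^{n−1}(λ−j)) t^n/n!. -/
def degLog (l : ℝ) : PowerSeries ℝ :=
  PowerSeries.mk fun n => if n = 0 then 0 else (∏ j ∈ range (n - 1), (l - (j + 1))) / n !

/-- composition Σ_k a_k f^k, valid when f has zero constant term. -/
def psComp (a : ℕ → ℝ) (f : PowerSeries ℝ) : PowerSeries ℝ :=
  PowerSeries.mk fun n => ∑ k ∈ range (n + 1), a k * PowerSeries.coeff n (f ^ k)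

/-- e_λ^x(f), the degenerate exponential composed with f (f with zero constant term). -/
def degExpComp (l x : ℝ) (f : PowerSeries ℝ) : PowerSeries ℝ :=
  psComp (fun k => dfall l x k / k !) f

/-- degenerate Stirling numbers of the second kind. -/
def dS2 (l : ℝ) (n k : ℕ) : ℝ :=
  (n ! : ℝ) / k ! * PowerSeries.coeff n ((degExp l 1 - 1) ^ k)

/-- degenerate Stirling numbers of the first kind. -/
def dS1 (l : ℝ) (n k : ℕ) : ℝ :=
  (n ! : ℝ) / k ! * PowerSeries.coeff n (degLog l ^ k)

/-- (signed) Stirling numbers of the first kind: coefficients of x(x-1)···(x-n+1). -/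
def sS1 (n k : ℕ) : ℝ := (descPochhammer ℝ n).coeff k

/-- fully degenerate Bell polynomial φ_{n,λ}(x). -/
def dBell (l : ℝ) (n : ℕ) (x : ℝ) : ℝ := ∑ k ∈ range (n + 1), dS2 l n k * dfall l x k

/-- degenerate Whitney numbers of the second kind. -/
def dW (m : ℕ) (l : ℝ) (n k : ℕ) : ℝ :=
  (n ! : ℝ) / k ! *
    PowerSeries.coeff n (degExp l 1 * ((degExp l (m : ℝ) - 1) * PowerSeries.C (R := ℝ) (1 / m)) ^ k)

/-- fully degenerate Dowling polynomial d_{m,λ}(n,x). -/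
def dDowling (m : ℕ) (l : ℝ) (n : ℕ) (x : ℝ) : ℝ :=
  ∑ k ∈ range (n + 1), dW m l n k * dfall l x k

/-- division of a power series by t (coefficient shift). -/
def divT (f : PowerSeries ℝ) : PowerSeries ℝ :=
  PowerSeries.mk fun n => PowerSeries.coeff (n + 1) f

/-- degenerate Bernoulli polynomials β_{n,λ}(x): (t/(e_λ(t)−1)) e_λ^x(t) = Σ β_{n,λ}(x) tⁿ/n!. -/
def dBernoulliPoly (l : ℝ) (n : ℕ) (x : ℝ) : ℝ :=
  (n ! : ℝ) * PowerSeries.coeff n ((divT (degExp l 1 - 1))⁻¹ * degExp l x)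

/-- the λ-falling factorial polynomial (x)_{k,λ}. -/
def dfallPoly (l : ℝ) (k : ℕ) : Polynomial ℝ :=
  ∏ i ∈ range k, (Polynomial.X - Polynomial.C (i * l))

/-- degenerate poly-Bell polynomials B^{(r)}_{n,λ}(x). -/
def dPolyBell (r : ℤ) (l : ℝ) (n : ℕ) (x : ℝ) : ℝ :=
  (n ! : ℝ) * PowerSeries.coeff n
    (divT (psComp (fun k => if k = 0 then 0 else dfall l 1 k / ((k - 1)! * (k : ℝ) ^ r))
        (degLog l)) *
      (divT (degExp l 1 - 1))⁻¹ * degExp l x)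

/-- degenerate Bernoulli polynomials of the second kind b_{n,λ}(x). -/
def dBern2 (l : ℝ) (n : ℕ) (x : ℝ) : ℝ :=
  (n ! : ℝ) *
    PowerSeries.coeff n ((divT (degLog l))⁻¹ * PowerSeries.mk fun j => dfall 1 x j / j !)


/-! Put `G = (e_λ^m(t) - 1)/m`. Since `e_{λ/m}(t) = e_λ^m(t/m)` and `(x/m)_{k,λ/m} = m^{-k} (x)_{k,λ}`,
the coefficients of `φ_{n,λ/m}(x/m)` are `m^{-n}` times those of the exponential generating function of
the `G^k`. The Whitney numbers are those of `e_λ(t) G^k`, and a binomial convolution with `(-1)_{n,λ}`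
multiplies an exponential generating function by `e_λ^{-1}(t) = e_λ(t)⁻¹`, which removes the factor `e_λ(t)`. -/

theorem PowerSeries.factorial_mul_coeff_mul {R : Type*} [CommSemiring R] (F H : R⟦X⟧) (n : ℕ) :
    n ! * coeff n (F * H) = ∑ ij ∈ antidiagonal n,
      n.choose ij.1 * ((ij.1 ! * coeff ij.1 F) * (ij.2 ! * coeff ij.2 H)) := by
  rw [coeff_mul, mul_sum]
  refine sum_congr rfl fun ij hij => ?_
  obtain ⟨i, j⟩ := ij
  obtain rfl : i + j = n := mem_antidiagonal.mp hij
  rw [← Nat.add_choose_mul_factorial_mul_factorial, Nat.choose_symm_add]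
  push_cast
  ring

lemma dfall_succ (l x : ℝ) (n : ℕ) : dfall l x (n + 1) = dfall l x n * (x - n * l) :=
  prod_range_succ _ n

lemma dfall_add (l x y : ℝ) (n : ℕ) :
    dfall l (x + y) n =
      ∑ ij ∈ antidiagonal n, n.choose ij.1 * (dfall l x ij.1 * dfall l y ij.2) := by
  induction n with
  | zero => simp [dfall]
  | succ n ih =>
    rw [sum_antidiagonal_choose_succ_mul (fun i j => dfall l x i * dfall l y j), ← sum_add_distrib,
      dfall_succ, ih, sum_mul]
    refine sum_congr rfl fun ij hij => ?_
    have hn : n = ij.1 + ij.2 := (mem_antidiagonal.mp hij).symm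
    rw [← Nat.choose_symm_of_eq_add hn, dfall_succ, dfall_succ, hn]
    push_cast
    ring

@[simp]
lemma coeff_degExp (l x : ℝ) (n : ℕ) : coeff n (degExp l x) = dfall l x n / n ! :=
  coeff_mk _ _

lemma degExp_add (l x y : ℝ) : degExp l (x + y) = degExp l x * degExp l y := by
  ext n
  have hn : (n ! : ℝ) ≠ 0 := by positivity
  rw [← mul_right_inj' hn, factorial_mul_coeff_mul, coeff_degExp, mul_div_cancel₀ _ hn, dfall_add]
  refine sum_congr rfl fun ij _ => ?_
  have hi : (ij.1 ! : ℝ) ≠ 0 := by positivity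
  have hj : (ij.2 ! : ℝ) ≠ 0 := by positivity
  rw [coeff_degExp, coeff_degExp, mul_div_cancel₀ _ hi, mul_div_cancel₀ _ hj]

lemma degExp_zero (l : ℝ) : degExp l 0 = 1 := by
  ext n
  cases n with
  | zero => simp [dfall]
  | succ n => simp [dfall, prod_range_succ']

lemma degExp_one_mul_degExp_neg_one (l : ℝ) : degExp l 1 * degExp l (-1) = 1 := by
  rw [← degExp_add, add_neg_cancel, degExp_zero]

lemma dfall_div_div (l x M : ℝ) (n : ℕ) : dfall (l / M) (x / M) n = (M ^ n)⁻¹ * dfall l x n := by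
  have hpow : (M ^ n)⁻¹ = ∏ _i ∈ range n, M⁻¹ := by simp
  rw [dfall, dfall, hpow, ← prod_mul_distrib]
  refine prod_congr rfl fun i _ => ?_
  ring

lemma degExp_div_div (l x M : ℝ) : degExp (l / M) (x / M) = rescale M⁻¹ (degExp l x) := by
  ext n
  rw [coeff_rescale, coeff_degExp, coeff_degExp, dfall_div_div, inv_pow, mul_div_assoc]

def whitneySeries (l M : ℝ) : ℝ⟦X⟧ := (degExp l M - 1) * C (1 / M)

lemma constantCoeff_whitneySeries (l M : ℝ) : constantCoeff (whitneySeries l M) = 0 := by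
  rw [whitneySeries, map_mul, map_sub, map_one, ← coeff_zero_eq_constantCoeff_apply, coeff_degExp]
  simp [dfall]

lemma dW_eq (m : ℕ) (l : ℝ) (n k : ℕ) :
    dW m l n k = n ! / k ! * coeff n (degExp l 1 * whitneySeries l m ^ k) := rfl

lemma dW_eq_zero_of_lt (m : ℕ) (l : ℝ) {n k : ℕ} (h : n < k) : dW m l n k = 0 := by
  have hdvd : X ^ k ∣ degExp l 1 * whitneySeries l m ^ k :=
    dvd_mul_of_dvd_right (pow_dvd_pow_of_dvd (X_dvd_iff.mpr (constantCoeff_whitneySeries l m)) k) _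
  rw [dW_eq, X_pow_dvd_iff.mp hdvd n h, mul_zero]

lemma dDowling_eq_sum_range (m : ℕ) (l : ℝ) (x : ℝ) {n k : ℕ} (hk : k ≤ n) :
    dDowling m l k x = ∑ j ∈ range (n + 1), dW m l k j * dfall l x j := by
  refine sum_subset (range_subset_range.mpr (by omega)) fun j _ hj => ?_
  rw [dW_eq_zero_of_lt m l (by simpa using hj), zero_mul]

lemma dS2_div (l : ℝ) {M : ℝ} (hM : M ≠ 0) (n k : ℕ) :
    dS2 (l / M) n k = (M ^ n)⁻¹ * (n ! / k ! * coeff n ((degExp l M - 1) ^ k)) := by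
  have h : degExp (l / M) 1 - 1 = rescale M⁻¹ (degExp l M - 1) := by
    rw [map_sub, map_one, ← degExp_div_div, div_self hM]
  rw [dS2, h, ← map_pow, coeff_rescale, inv_pow]
  ring

lemma dBell_div_div (l : ℝ) {M : ℝ} (hM : M ≠ 0) (x : ℝ) (n : ℕ) :
    dBell (l / M) n (x / M) = (M ^ n)⁻¹ *
      ∑ k ∈ range (n + 1), n ! / k ! * coeff n (whitneySeries l M ^ k) * dfall l x k := by
  rw [dBell, mul_sum]
  refine sum_congr rfl fun k _ => ?_
  rw [dS2_div l hM, dfall_div_div, whitneySeries, mul_pow, ← map_pow, coeff_mul_C, one_div, inv_pow]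
  ring

lemma sum_choose_mul_dfall_neg_one_mul_dW (m : ℕ) (l : ℝ) (n j : ℕ) :
    ∑ k ∈ range (n + 1), n.choose k * dfall l (-1) (n - k) * dW m l k j =
      n ! / j ! * coeff n (whitneySeries l m ^ j) := by
  have hn := factorial_mul_coeff_mul (degExp l 1 * whitneySeries l m ^ j) (degExp l (-1)) n
  rw [mul_right_comm, degExp_one_mul_degExp_neg_one, one_mul,
    Nat.sum_antidiagonal_eq_sum_range_succ_mk] at hn
  rw [div_mul_eq_mul_div, hn, sum_div]
  refine sum_congr rfl fun k _ => ?_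
  have hk : ((n - k) ! : ℝ) ≠ 0 := by positivity
  rw [dW_eq, coeff_degExp, mul_div_cancel₀ _ hk]
  ring

theorem stmt14_general (l : ℝ) (m : ℕ) (hm : 0 < m) (n : ℕ) (x : ℝ) :
    dBell (l / m) n (x / m) =
      ((m : ℝ) ^ n)⁻¹ *
        ∑ k ∈ range (n + 1), n.choose k * dfall l (-1) (n - k) * dDowling m l k x := by
  rw [dBell_div_div l (Nat.cast_ne_zero.mpr hm.ne')]
  congr 1
  calc ∑ j ∈ range (n + 1), n ! / j ! * coeff n (whitneySeries l m ^ j) * dfall l x j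
      = ∑ j ∈ range (n + 1), ∑ k ∈ range (n + 1),
          n.choose k * dfall l (-1) (n - k) * (dW m l k j * dfall l x j) := by
        refine sum_congr rfl fun j _ => ?_
        simp_rw [← mul_assoc, ← sum_mul, sum_choose_mul_dfall_neg_one_mul_dW]
    _ = ∑ k ∈ range (n + 1), n.choose k * dfall l (-1) (n - k) * dDowling m l k x := by
        rw [sum_comm]
        refine sum_congr rfl fun k hk => ?_
        rw [dDowling_eq_sum_range m l x (Nat.lt_succ_iff.mp (mem_range.mp hk)), mul_sum]

theorem stmt14 (l : ℝ) (hl : l ≠ 0) (m : ℕ) (hm : 0 < m) (n : ℕ) (x : ℝ) :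
    dBell (l / m) n (x / m) =
      ((m : ℝ) ^ n)⁻¹ *
        ∑ k ∈ range (n + 1), n.choose k * dfall l (-1) (n - k) * dDowling m l k x :=
  stmt14_general l m hm n x
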